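/- Every symmetric real bilinear form on C^2 (as a real vector space) invariant under the group generated by {A·B̃ : A, B Hermitian of determinant 1} is zero. -/
import Mathlib


open Matrix

/-- Trace reversal of a `2×2` matrix: `Ã := A - tr(A)·I`. -/
noncomputable def trev (A : Matrix (Fin 2) (Fin 2) ℂ) : Matrix (Fin 2) (Fin 2) ℂ :=
  A - (Matrix.trace A) • (1 : Matrix (Fin 2) (Fin 2) ℂ)

/-- basis vectors of `ℂ²` over `ℝ` -/
def va : Fin 2 → ℂ := ![1, 0]
def vb : Fin 2 → ℂ := ![Complex.I, 0]
def vc : Fin 2 → ℂ := ![0, 1]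
def vd : Fin 2 → ℂ := ![0, Complex.I]

lemma trev_one : trev (1 : Matrix (Fin 2) (Fin 2) ℂ) = -1 := by
  ext i j
  fin_cases i <;> fin_cases j <;>
    simp [trev, Matrix.trace, Matrix.diag, Fin.sum_univ_two, Matrix.one_apply] <;> norm_num

/-- a diagonal hermitian matrix of determinant 1 -/
noncomputable def mA1 : Matrix (Fin 2) (Fin 2) ℂ := !![2, 0; 0, 1/2]
/-- a real boost -/
noncomputable def mA2 : Matrix (Fin 2) (Fin 2) ℂ := !![5/3, 4/3; 4/3, 5/3]
/-- a boost in another direction -/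
noncomputable def mA3 : Matrix (Fin 2) (Fin 2) ℂ := !![5/3, (4/3)*Complex.I; -(4/3)*Complex.I, 5/3]

lemma mA1_herm : mA1.IsHermitian := by
  rw [Matrix.IsHermitian]; ext i j
  fin_cases i <;> fin_cases j <;> simp [mA1, Matrix.conjTranspose_apply]

lemma mA2_herm : mA2.IsHermitian := by
  rw [Matrix.IsHermitian]; ext i j
  fin_cases i <;> fin_cases j <;> simp [mA2, Matrix.conjTranspose_apply]

lemma mA3_herm : mA3.IsHermitian := by
  rw [Matrix.IsHermitian]; ext i j
  fin_cases i <;> fin_cases j <;> simp [mA3, Matrix.conjTranspose_apply]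

lemma mA1_det : mA1.det = 1 := by
  simp [mA1, Matrix.det_fin_two_of]

lemma mA2_det : mA2.det = 1 := by
  simp [mA2, Matrix.det_fin_two_of]; norm_num

lemma mA3_det : mA3.det = 1 := by
  simp [mA3, Matrix.det_fin_two_of]
  ring_nf
  simp [Complex.I_sq]
  norm_num

lemma mA1_a : mA1.mulVec va = (2:ℝ) • va := by
  funext i
  fin_cases i <;>
    simp [mA1, va, Matrix.mulVec, dotProduct, Fin.sum_univ_two, Complex.real_smul]

lemma mA1_b : mA1.mulVec vb = (2:ℝ) • vb := by
  funext i
  fin_cases i <;>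
    simp [mA1, vb, Matrix.mulVec, dotProduct, Fin.sum_univ_two, Complex.real_smul]

lemma mA1_c : mA1.mulVec vc = (1/2:ℝ) • vc := by
  funext i
  fin_cases i <;>
    simp [mA1, vc, Matrix.mulVec, dotProduct, Fin.sum_univ_two, Complex.real_smul]

lemma mA1_d : mA1.mulVec vd = (1/2:ℝ) • vd := by
  funext i
  fin_cases i <;>
    simp [mA1, vd, Matrix.mulVec, dotProduct, Fin.sum_univ_two, Complex.real_smul]

lemma mA2_a : mA2.mulVec va = (5/3:ℝ) • va + (4/3:ℝ) • vc := by
  funext i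
  fin_cases i <;>
    simp [mA2, va, vc, Matrix.mulVec, dotProduct, Fin.sum_univ_two, Complex.real_smul]

lemma mA2_b : mA2.mulVec vb = (5/3:ℝ) • vb + (4/3:ℝ) • vd := by
  funext i
  fin_cases i <;>
    simp [mA2, vb, vd, Matrix.mulVec, dotProduct, Fin.sum_univ_two, Complex.real_smul]

lemma mA2_c : mA2.mulVec vc = (4/3:ℝ) • va + (5/3:ℝ) • vc := by
  funext i
  fin_cases i <;>
    simp [mA2, va, vc, Matrix.mulVec, dotProduct, Fin.sum_univ_two, Complex.real_smul]

lemma mA2_d : mA2.mulVec vd = (4/3:ℝ) • vb + (5/3:ℝ) • vd := by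
  funext i
  fin_cases i <;>
    simp [mA2, vb, vd, Matrix.mulVec, dotProduct, Fin.sum_univ_two, Complex.real_smul]

lemma mA3_a : mA3.mulVec va = (5/3:ℝ) • va + (-(4/3):ℝ) • vd := by
  funext i
  fin_cases i <;>
    simp [mA3, va, vd, Matrix.mulVec, dotProduct, Fin.sum_univ_two, Complex.real_smul, Complex.ext_iff] <;>
    ring_nf

lemma mA3_d : mA3.mulVec vd = (-(4/3):ℝ) • va + (5/3:ℝ) • vd := by
  funext i
  fin_cases i <;>
    simp [mA3, va, vd, Matrix.mulVec, dotProduct, Fin.sum_univ_two, Complex.real_smul, Complex.ext_iff] <;>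
    ring_nf

lemma vdecomp (ψ : Fin 2 → ℂ) :
    ψ = (ψ 0).re • va + (ψ 0).im • vb + (ψ 1).re • vc + (ψ 1).im • vd := by
  funext i
  fin_cases i <;>
    simp [va, vb, vc, vd, Complex.real_smul, Complex.ext_iff]

/-- There is no nonzero invariant symmetric real bilinear form on the real spin
representation `ℂ²` of `Spin(3,1)`: every symmetric `ℝ`-bilinear form on `ℂ²`
invariant under all the generators `A·B̃` (with `A, B` hermitian of
determinant 1) of the group vanishes. -/
theorem no_invariant_symmetric_bilinear_form
    (Bl : (Fin 2 → ℂ) → (Fin 2 → ℂ) → ℝ)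
    (hadd₁ : ∀ ψ ψ' φ, Bl (ψ + ψ') φ = Bl ψ φ + Bl ψ' φ)
    (hsmul₁ : ∀ (r : ℝ) ψ φ, Bl (r • ψ) φ = r * Bl ψ φ)
    (hadd₂ : ∀ ψ φ φ', Bl ψ (φ + φ') = Bl ψ φ + Bl ψ φ')
    (hsmul₂ : ∀ (r : ℝ) ψ φ, Bl ψ (r • φ) = r * Bl ψ φ)
    (hsymm : ∀ ψ φ, Bl ψ φ = Bl φ ψ)
    (hinv : ∀ A B : Matrix (Fin 2) (Fin 2) ℂ, A.IsHermitian → B.IsHermitian →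
      A.det = 1 → B.det = 1 → ∀ ψ φ,
        Bl ((A * trev B).mulVec ψ) ((A * trev B).mulVec φ) = Bl ψ φ) :
    ∀ ψ φ, Bl ψ φ = 0 := by
  -- invariance under a single hermitian matrix of determinant 1
  have hA : ∀ A : Matrix (Fin 2) (Fin 2) ℂ, A.IsHermitian → A.det = 1 →
      ∀ ψ φ, Bl (A.mulVec ψ) (A.mulVec φ) = Bl ψ φ := by
    intro A hH hd ψ φ
    have h := hinv A 1 hH Matrix.isHermitian_one hd Matrix.det_one ψ φ
    rw [trev_one] at h
    have hneg : A * (-1) = -A := by simp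
    rw [hneg] at h
    have hn : ∀ v : Fin 2 → ℂ, (-A).mulVec v = (-1:ℝ) • (A.mulVec v) := by
      intro v
      rw [Matrix.neg_mulVec]
      funext i
      simp
    rw [hn ψ, hn φ, hsmul₁, hsmul₂] at h
    linarith
  -- expansion of the bilinear form on sums of two scaled vectors
  have expand : ∀ (r t r' t' : ℝ) u v u' v',
      Bl (r • u + t • v) (r' • u' + t' • v') =
        r*r'*Bl u u' + r*t'*Bl u v' + t*r'*Bl v u' + t*t'*Bl v v' := by
    intro r t r' t' u v u' v'
    simp only [hadd₁, hadd₂, hsmul₁, hsmul₂]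
    ring
  -- the ten basis values vanish
  have haa : Bl va va = 0 := by
    have h := hA mA1 mA1_herm mA1_det va va
    rw [mA1_a, hsmul₁, hsmul₂] at h; linarith
  have hbb : Bl vb vb = 0 := by
    have h := hA mA1 mA1_herm mA1_det vb vb
    rw [mA1_b, hsmul₁, hsmul₂] at h; linarith
  have hab : Bl va vb = 0 := by
    have h := hA mA1 mA1_herm mA1_det va vb
    rw [mA1_a, mA1_b, hsmul₁, hsmul₂] at h; linarith
  have hcc : Bl vc vc = 0 := by
    have h := hA mA1 mA1_herm mA1_det vc vc
    rw [mA1_c, hsmul₁, hsmul₂] at h; linarith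
  have hdd : Bl vd vd = 0 := by
    have h := hA mA1 mA1_herm mA1_det vd vd
    rw [mA1_d, hsmul₁, hsmul₂] at h; linarith
  have hcd : Bl vc vd = 0 := by
    have h := hA mA1 mA1_herm mA1_det vc vd
    rw [mA1_c, mA1_d, hsmul₁, hsmul₂] at h; linarith
  have hba : Bl vb va = 0 := by rw [hsymm]; exact hab
  have hdc : Bl vd vc = 0 := by rw [hsymm]; exact hcd
  have hac : Bl va vc = 0 := by
    have h := hA mA2 mA2_herm mA2_det va vc
    rw [mA2_a, mA2_c, expand] at h
    rw [hsymm vc va] at h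
    nlinarith [h]
  have hbd : Bl vb vd = 0 := by
    have h := hA mA2 mA2_herm mA2_det vb vd
    rw [mA2_b, mA2_d, expand] at h
    rw [hsymm vd vb] at h
    nlinarith [h]
  have hca : Bl vc va = 0 := by rw [hsymm]; exact hac
  have hdb : Bl vd vb = 0 := by rw [hsymm]; exact hbd
  -- equations mixing Bl va vd and Bl vb vc
  have e1 := hA mA2 mA2_herm mA2_det va vd
  rw [mA2_a, mA2_d, expand] at e1
  have e2 := hA mA3 mA3_herm mA3_det va vd
  rw [mA3_a, mA3_d, expand] at e2
  rw [hsymm vd va] at e2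
  have had : Bl va vd = 0 := by nlinarith [e2]
  have hda : Bl vd va = 0 := by rw [hsymm]; exact had
  have hbc : Bl vb vc = 0 := by
    rw [hab, had, hcd, hsymm vc vb] at e1
    nlinarith [e1]
  have hcb : Bl vc vb = 0 := by rw [hsymm]; exact hbc
  -- expand a general argument
  have expand4L : ∀ (c1 c2 c3 c4 : ℝ) v1 v2 v3 v4 φ,
      Bl (c1 • v1 + c2 • v2 + c3 • v3 + c4 • v4) φ =
        c1 * Bl v1 φ + c2 * Bl v2 φ + c3 * Bl v3 φ + c4 * Bl v4 φ := by
    intro c1 c2 c3 c4 v1 v2 v3 v4 φ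
    rw [hadd₁, hadd₁, hadd₁, hsmul₁, hsmul₁, hsmul₁, hsmul₁]
  have expand4R : ∀ (c1 c2 c3 c4 : ℝ) v1 v2 v3 v4 ψ,
      Bl ψ (c1 • v1 + c2 • v2 + c3 • v3 + c4 • v4) =
        c1 * Bl ψ v1 + c2 * Bl ψ v2 + c3 * Bl ψ v3 + c4 * Bl ψ v4 := by
    intro c1 c2 c3 c4 v1 v2 v3 v4 ψ
    rw [hadd₂, hadd₂, hadd₂, hsmul₂, hsmul₂, hsmul₂, hsmul₂]
  intro ψ φ
  rw [vdecomp ψ, vdecomp φ, expand4L, expand4R, expand4R, expand4R, expand4R,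
    haa, hab, hac, had, hba, hbb, hbc, hbd, hca, hcb, hcc, hcd, hda, hdb, hdc, hdd]
  ring
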